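/- Let A₁₁, A₁₂, A₂₁, A₂₂ be objects of a category with morphisms f₁, f₂ : A₁₁ → A₁₂, f'₁, f'₂ : A₁₁ → A₂₁, g₁, g₂ : A₂₁ → A₂₂, g'₁, g'₂ : A₁₂ → A₂₂ satisfying gᵢ ∘ f'ⱼ = g'ⱼ ∘ fᵢ for all i, j ∈ {1,2}, and suppose there exist s : A₁₂ → A₁₁ with f₁ ∘ s = f₂ ∘ s = id and s' : A₂₁ → A₁₁ with f'₁ ∘ s' = f'₂ ∘ s' = id. Then for any morphism x : A₂₂ → B, one has x ∘ g'₁ ∘ f₁ = x ∘ g'₂ ∘ f₂ if and only if both x ∘ g'₁ = x ∘ g'₂ and x ∘ g₁ = x ∘ g₂. -/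

import Mathlib

open CategoryTheory

universe v u

theorem eq_of_comp_eq_of_common_section {C : Type u} [Category.{v} C] {X Y Z : C}
    {f₁ f₂ : X ⟶ Y} (s : Y ⟶ X) (hs₁ : s ≫ f₁ = 𝟙 Y) (hs₂ : s ≫ f₂ = 𝟙 Y)
    {a b : Y ⟶ Z} (h : f₁ ≫ a = f₂ ≫ b) : a = b := by
  simpa only [reassoc_of% hs₁, reassoc_of% hs₂] using s ≫= h

theorem coequalizes_diagonal_iff_general
    {C : Type u} [Category.{v} C]
    {A₁₁ A₁₂ A₂₁ A₂₂ : C}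
    (f₁ f₂ : A₁₁ ⟶ A₁₂) (f'₁ : A₁₁ ⟶ A₂₁)
    (g₁ g₂ : A₂₁ ⟶ A₂₂) (g'₁ g'₂ : A₁₂ ⟶ A₂₂)
    (w₁₁ : f'₁ ≫ g₁ = f₁ ≫ g'₁) (w₂₁ : f'₁ ≫ g₂ = f₂ ≫ g'₁)
    (s : A₁₂ ⟶ A₁₁) (hs₁ : s ≫ f₁ = 𝟙 A₁₂) (hs₂ : s ≫ f₂ = 𝟙 A₁₂)
    (s' : A₂₁ ⟶ A₁₁) (hs'₁ : s' ≫ f'₁ = 𝟙 A₂₁)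
    {B : C} (x : A₂₂ ⟶ B) :
    f₁ ≫ g'₁ ≫ x = f₂ ≫ g'₂ ≫ x ↔ (g'₁ ≫ x = g'₂ ≫ x ∧ g₁ ≫ x = g₂ ≫ x) := by
  have : Epi f'₁ := (SplitEpi.mk s' hs'₁).epi
  constructor
  · intro h
    have hg' : g'₁ ≫ x = g'₂ ≫ x := eq_of_comp_eq_of_common_section s hs₁ hs₂ h
    refine ⟨hg', (cancel_epi f'₁).1 ?_⟩
    rw [reassoc_of% w₁₁, reassoc_of% w₂₁, h, hg']
  · rintro ⟨hg', hg⟩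
    rw [← reassoc_of% w₁₁, hg, reassoc_of% w₂₁, hg']

/-- Given the commuting data of the proposition in Lack's paper: a morphism
`x : A₂₂ ⟶ B` coequalizes `(g'₁ ∘ f₁, g'₂ ∘ f₂)` iff it coequalizes both `(g₁, g₂)`
and `(g'₁, g'₂)`. -/
theorem coequalizes_diagonal_iff
    {C : Type u} [Category.{v} C]
    {A₁₁ A₁₂ A₂₁ A₂₂ : C}
    (f₁ f₂ : A₁₁ ⟶ A₁₂) (f'₁ f'₂ : A₁₁ ⟶ A₂₁)
    (g₁ g₂ : A₂₁ ⟶ A₂₂) (g'₁ g'₂ : A₁₂ ⟶ A₂₂)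
    (w₁₁ : f'₁ ≫ g₁ = f₁ ≫ g'₁) (w₁₂ : f'₂ ≫ g₁ = f₁ ≫ g'₂)
    (w₂₁ : f'₁ ≫ g₂ = f₂ ≫ g'₁) (w₂₂ : f'₂ ≫ g₂ = f₂ ≫ g'₂)
    (s : A₁₂ ⟶ A₁₁) (hs₁ : s ≫ f₁ = 𝟙 A₁₂) (hs₂ : s ≫ f₂ = 𝟙 A₁₂)
    (s' : A₂₁ ⟶ A₁₁) (hs'₁ : s' ≫ f'₁ = 𝟙 A₂₁) (hs'₂ : s' ≫ f'₂ = 𝟙 A₂₁)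
    {B : C} (x : A₂₂ ⟶ B) :
    f₁ ≫ g'₁ ≫ x = f₂ ≫ g'₂ ≫ x ↔ (g'₁ ≫ x = g'₂ ≫ x ∧ g₁ ≫ x = g₂ ≫ x) :=
  coequalizes_diagonal_iff_general f₁ f₂ f'₁ g₁ g₂ g'₁ g'₂ w₁₁ w₂₁ s hs₁ hs₂ s' hs'₁ x
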